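/- arXiv:1612.04241 — 2 statements merged into one kernel-verified Lean document; each statement's English description precedes it below -/
import Mathlib

section
/- Fix L₁, L₂ ≥ 1, c ∈ (0,1), δ > 0, and τ ∈ ℝ, ξ, ξ' ∈ ℝ². Let E ⊆ ℝ × ℝ² be the set of (τ₁, ξ₁) such that |ξ₁ − ξ'| ≤ δ, ⟨τ − τ₁ ± c|ξ − ξ₁|⟩ ≤ 2L₁, ⟨τ₁ ± |ξ₁|⟩ ≤ 2L₂, and the direction of ξ₁ makes an angle at most π/A with the positive x-axis where A ≥ 2¹⁰(1−c)^{−1/2} (so that |∂_{(ξ₁)₁}(τ ± |ξ₁| ± c|ξ−ξ₁|)| ≥ (1−c)/2 on E). Then the 3-dimensional Lebesgue measure of E is ≲ δ · L₁ · L₂, with implicit constant depending only on c. -/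
open MeasureTheory Real

/-- Japanese bracket `⟨x⟩ = √(1+x²)`. -/
noncomputable def jb (x : ℝ) : ℝ := Real.sqrt (1 + x ^ 2)

/-!
Fubini in the order `τ₁`, then the first, then the second spatial coordinate. For fixed `ξ₁` both
bracket conditions confine `τ₁` to an interval of length `4 min(L₁, L₂)`, and adding them gives
`|τ ± |ξ₁| ± c|ξ - ξ₁|| ≤ 2(L₁ + L₂)`. Inside the cone `|ξ₁| cos(π/A) ≤ (ξ₁)₁`, moving along a
horizontal line increases `|ξ₁|` at rate at least `cos(π/A) ≥ (1 + c)/2`, while `c|ξ - ξ₁|` changes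
at rate at most `c`; hence the horizontal sections have length `≲ (L₁ + L₂)/(1 - c)`. The second
coordinate ranges over an interval of length `2δ`, and `min(L₁, L₂)(L₁ + L₂) ≤ 2 L₁ L₂`.
-/

open scoped ENNReal

@[fun_prop]
lemma continuous_jb : Continuous jb := by
  unfold jb; fun_prop

lemma abs_le_of_jb_le {u M : ℝ} (h : jb u ≤ M) : |u| ≤ M :=
  (abs_le_sqrt (by linarith)).trans h

lemma volume_setOf_jb_le_le (α β M₁ M₂ : ℝ) :
    volume {t : ℝ | jb (α - t) ≤ M₁ ∧ jb (t + β) ≤ M₂} ≤ ENNReal.ofReal (2 * min M₁ M₂) := by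
  have h₁ : {t : ℝ | jb (α - t) ≤ M₁ ∧ jb (t + β) ≤ M₂} ⊆ Metric.closedBall α M₁ :=
    fun t ht => by
      rw [Metric.mem_closedBall, Real.dist_eq, abs_sub_comm]; exact abs_le_of_jb_le ht.1
  have h₂ : {t : ℝ | jb (α - t) ≤ M₁ ∧ jb (t + β) ≤ M₂} ⊆ Metric.closedBall (-β) M₂ :=
    fun t ht => by
      rw [Metric.mem_closedBall, Real.dist_eq, sub_neg_eq_add]; exact abs_le_of_jb_le ht.2
  rcases min_choice M₁ M₂ with h | h <;> rw [h, ← Real.volume_closedBall]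
  exacts [measure_mono h₁, measure_mono h₂]

lemma MeasureTheory.Measure.prod_le_mul_of_section_le {α β : Type*} [MeasurableSpace α]
    [MeasurableSpace β] {μ : Measure α} {ν : Measure β} [SFinite μ] [SFinite ν]
    {s : Set (α × β)} (hs : MeasurableSet s) {t : Set β} {K : ℝ≥0∞}
    (hst : ∀ p ∈ s, p.2 ∈ t) (hK : ∀ b ∈ t, μ ((·, b) ⁻¹' s) ≤ K) :
    μ.prod ν s ≤ K * ν t := by
  rw [Measure.prod_apply_symm hs]
  refine (lintegral_mono fun b => ?_).trans (lintegral_indicator_const_le t K)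
  by_cases hb : b ∈ t
  · simpa [hb] using hK b hb
  · have : (·, b) ⁻¹' s = ∅ := Set.eq_empty_of_forall_notMem fun a ha => hb (hst _ ha)
    simp [this]

lemma Real.volume_le_ofReal_of_abs_sub_le {s : Set ℝ} {d : ℝ}
    (h : ∀ x ∈ s, ∀ y ∈ s, |x - y| ≤ d) : volume s ≤ ENNReal.ofReal d :=
  (Real.volume_le_diam s).trans <| Metric.ediam_le fun x hx y hy => by
    rw [edist_dist, Real.dist_eq]; exact ENNReal.ofReal_le_ofReal (h x hx y hy)

lemma EuclideanSpace.measurePreserving_vecCons_two :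
    MeasurePreserving (fun p : ℝ × ℝ => !₂[p.1, p.2]) volume volume :=
  (PiLp.volume_preserving_toLp (Fin 2)).comp ((volume_preserving_finTwoArrow ℝ).symm _)

lemma EuclideanSpace.norm_vecCons_two (x y : ℝ) :
    ‖(!₂[x, y] : EuclideanSpace ℝ (Fin 2))‖ = √(x ^ 2 + y ^ 2) := by
  simp [EuclideanSpace.norm_eq]

lemma EuclideanSpace.norm_vecCons_two_sub (x₁ x₂ y : ℝ) :
    ‖(!₂[x₁, y] - !₂[x₂, y] : EuclideanSpace ℝ (Fin 2))‖ = |x₁ - x₂| := by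
  simp [EuclideanSpace.norm_eq, Real.sqrt_sq_eq_abs]

lemma mul_sub_le_sqrt_sub_sqrt {κ x₁ x₂ y : ℝ} (hx : x₁ ≤ x₂)
    (h₁ : √(x₁ ^ 2 + y ^ 2) * κ ≤ x₁) (h₂ : √(x₂ ^ 2 + y ^ 2) * κ ≤ x₂) :
    κ * (x₂ - x₁) ≤ √(x₂ ^ 2 + y ^ 2) - √(x₁ ^ 2 + y ^ 2) := by
  set r₁ := √(x₁ ^ 2 + y ^ 2)
  set r₂ := √(x₂ ^ 2 + y ^ 2)
  have hr₁ : r₁ ^ 2 = x₁ ^ 2 + y ^ 2 := sq_sqrt (by positivity)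
  have hr₂ : r₂ ^ 2 = x₂ ^ 2 + y ^ 2 := sq_sqrt (by positivity)
  rcases (add_nonneg (sqrt_nonneg _) (sqrt_nonneg _) : 0 ≤ r₁ + r₂).eq_or_lt with h0 | h0
  · have hr : r₁ = 0 ∧ r₂ = 0 := by
      constructor <;> linarith [sqrt_nonneg (x₁ ^ 2 + y ^ 2), sqrt_nonneg (x₂ ^ 2 + y ^ 2)]
    have hx₁ : x₁ = 0 := by nlinarith
    have hx₂ : x₂ = 0 := by nlinarith
    simp [hr, hx₁, hx₂]
  · -- `(r₂ - r₁)(r₂ + r₁) = (x₂ - x₁)(x₂ + x₁)` and `x₁ + x₂ ≥ κ (r₁ + r₂)`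
    have hsum : (x₂ - x₁) * ((r₁ + r₂) * κ) ≤ (x₂ - x₁) * (x₁ + x₂) :=
      mul_le_mul_of_nonneg_left (by linarith) (by linarith)
    nlinarith

lemma sub_mul_sub_le_abs_sub {κ c a b x₁ x₂ y : ℝ} (ξ : EuclideanSpace ℝ (Fin 2))
    (ha : 1 ≤ |a|) (hb : |b| ≤ c) (hx : x₁ ≤ x₂)
    (h₁ : ‖!₂[x₁, y]‖ * κ ≤ x₁) (h₂ : ‖!₂[x₂, y]‖ * κ ≤ x₂) :
    (κ - c) * (x₂ - x₁) ≤ |(a * ‖!₂[x₂, y]‖ + b * ‖ξ - !₂[x₂, y]‖) -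
      (a * ‖!₂[x₁, y]‖ + b * ‖ξ - !₂[x₁, y]‖)| := by
  simp only [EuclideanSpace.norm_vecCons_two] at h₁ h₂ ⊢
  have hr := mul_sub_le_sqrt_sub_sqrt hx h₁ h₂
  have hq : |‖ξ - !₂[x₂, y]‖ - ‖ξ - !₂[x₁, y]‖| ≤ x₂ - x₁ := by
    refine (abs_norm_sub_norm_le _ _).trans_eq ?_
    rw [show ξ - !₂[x₂, y] - (ξ - !₂[x₁, y]) = !₂[x₁, y] - !₂[x₂, y] by abel,
      EuclideanSpace.norm_vecCons_two_sub, abs_sub_comm, abs_of_nonneg (sub_nonneg.2 hx)]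
  set d := √(x₂ ^ 2 + y ^ 2) - √(x₁ ^ 2 + y ^ 2)
  set e := ‖ξ - !₂[x₂, y]‖ - ‖ξ - !₂[x₁, y]‖
  have had : κ * (x₂ - x₁) ≤ |a * d| := by
    rw [abs_mul]
    exact hr.trans ((le_abs_self d).trans (le_mul_of_one_le_left (abs_nonneg d) ha))
  have hbe : |b * e| ≤ c * (x₂ - x₁) := by
    rw [abs_mul]
    exact mul_le_mul hb hq (abs_nonneg e) ((abs_nonneg b).trans hb)
  calc (κ - c) * (x₂ - x₁) ≤ |a * d| - |b * e| := by linarith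
    _ ≤ |a * d + b * e| := abs_sub_abs_le_abs_add _ _
    _ = _ := by congr 1; ring

lemma volume_setOf_cone_le {κ c a b τ B y : ℝ} (ξ : EuclideanSpace ℝ (Fin 2)) (hc : c < κ)
    (ha : 1 ≤ |a|) (hb : |b| ≤ c) :
    volume {x : ℝ | ‖!₂[x, y]‖ * κ ≤ x ∧ |τ + a * ‖!₂[x, y]‖ + b * ‖ξ - !₂[x, y]‖| ≤ B} ≤
      ENNReal.ofReal (2 * B / (κ - c)) := by
  refine Real.volume_le_ofReal_of_abs_sub_le fun x₁ h₁ x₂ h₂ => ?_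
  wlog hx : x₂ ≤ x₁ generalizing x₁ x₂
  · rw [abs_sub_comm]; exact this x₂ h₂ x₁ h₁ (le_of_not_ge hx)
  rw [abs_of_nonneg (sub_nonneg.2 hx), le_div_iff₀' (sub_pos.2 hc)]
  calc (κ - c) * (x₁ - x₂)
      ≤ |(a * ‖!₂[x₁, y]‖ + b * ‖ξ - !₂[x₁, y]‖) - (a * ‖!₂[x₂, y]‖ + b * ‖ξ - !₂[x₂, y]‖)| :=
        sub_mul_sub_le_abs_sub ξ ha hb hx h₂.1 h₁.1
    _ ≤ |τ + a * ‖!₂[x₁, y]‖ + b * ‖ξ - !₂[x₁, y]‖| +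
          |τ + a * ‖!₂[x₂, y]‖ + b * ‖ξ - !₂[x₂, y]‖| := by
        refine (abs_sub _ _).trans_eq' ?_; congr 1; ring
    _ ≤ 2 * B := by linarith [h₁.2, h₂.2]

lemma volume_cone_le {κ c a b τ B δ : ℝ} (ξ ξ' : EuclideanSpace ℝ (Fin 2)) (hc : c < κ)
    (ha : 1 ≤ |a|) (hb : |b| ≤ c) :
    volume {v : EuclideanSpace ℝ (Fin 2) |
        ‖v - ξ'‖ ≤ δ ∧ |τ + a * ‖v‖ + b * ‖ξ - v‖| ≤ B ∧ ‖v‖ * κ ≤ v 0} ≤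
      ENNReal.ofReal (2 * B / (κ - c)) * ENNReal.ofReal (2 * δ) := by
  have hF : MeasurableSet {v : EuclideanSpace ℝ (Fin 2) |
      ‖v - ξ'‖ ≤ δ ∧ |τ + a * ‖v‖ + b * ‖ξ - v‖| ≤ B ∧ ‖v‖ * κ ≤ v 0} := by
    simp only [Set.ofPred_and]
    exact (measurableSet_le (by fun_prop) (by fun_prop)).inter
      ((measurableSet_le (by fun_prop) (by fun_prop)).inter
        (measurableSet_le (by fun_prop) (by fun_prop)))
  have hmp := EuclideanSpace.measurePreserving_vecCons_two
  rw [← hmp.measure_preimage hF.nullMeasurableSet, Measure.volume_eq_prod,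
    ← Real.volume_closedBall (ξ' 1)]
  refine Measure.prod_le_mul_of_section_le (hF.preimage hmp.measurable) ?_ fun y _ => ?_
  · rintro ⟨x, y⟩ ⟨hδ, -, -⟩
    calc dist y (ξ' 1) = ‖(!₂[x, y] - ξ') 1‖ := by simp [Real.dist_eq]
      _ ≤ δ := (PiLp.norm_apply_le _ 1).trans hδ
  · refine (measure_mono fun x hx => ?_).trans
      (volume_setOf_cone_le (τ := τ) (B := B) (y := y) ξ hc ha hb)
    exact ⟨by simpa using hx.2.2, hx.2.1⟩

lemma one_add_div_two_le_cos {c θ : ℝ} (hc : c ≤ 1) (hθ₀ : 0 ≤ θ) (hθ : θ ≤ √(1 - c)) :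
    (1 + c) / 2 ≤ cos θ := by
  have hθsq : θ ^ 2 ≤ 1 - c :=
    (pow_le_pow_left₀ hθ₀ hθ 2).trans_eq (sq_sqrt (by linarith))
  linarith [one_sub_sq_div_two_le_cos (x := θ)]

lemma pi_div_le_sqrt_one_sub {c A : ℝ} (hc : c < 1) (hA : 2 ^ 10 / √(1 - c) ≤ A) :
    π / A ≤ √(1 - c) := by
  have hs : 0 < √(1 - c) := sqrt_pos.2 (by linarith)
  calc π / A ≤ π / (2 ^ 10 / √(1 - c)) :=
        div_le_div_of_nonneg_left pi_pos.le (by positivity) hA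
    _ = π / 2 ^ 10 * √(1 - c) := by field_simp
    _ ≤ 1 * √(1 - c) := by gcongr; linarith [pi_le_four]
    _ = √(1 - c) := one_mul _

lemma min_mul_add_le_two_mul {a b : ℝ} (ha : 0 ≤ a) (hb : 0 ≤ b) :
    min a b * (a + b) ≤ 2 * (a * b) := by
  rcases min_cases a b with ⟨h, h'⟩ | ⟨h, h'⟩ <;> rw [h] <;> nlinarith

lemma volume_jb_cone_region_le {M₁ M₂ κ c a b τ δ : ℝ} (ξ ξ' : EuclideanSpace ℝ (Fin 2))
    (hM₁ : 0 ≤ M₁) (hM₂ : 0 ≤ M₂) (hc : c < κ) (ha : 1 ≤ |a|) (hb : |b| ≤ c) :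
    volume {p : ℝ × EuclideanSpace ℝ (Fin 2) |
        ‖p.2 - ξ'‖ ≤ δ ∧ jb ((τ - p.1) + b * ‖ξ - p.2‖) ≤ M₁ ∧ jb (p.1 + a * ‖p.2‖) ≤ M₂ ∧
          ‖p.2‖ * κ ≤ p.2 0} ≤
      ENNReal.ofReal (8 * (min M₁ M₂ * (M₁ + M₂)) * δ / (κ - c)) := by
  set E := {p : ℝ × EuclideanSpace ℝ (Fin 2) |
    ‖p.2 - ξ'‖ ≤ δ ∧ jb ((τ - p.1) + b * ‖ξ - p.2‖) ≤ M₁ ∧ jb (p.1 + a * ‖p.2‖) ≤ M₂ ∧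
      ‖p.2‖ * κ ≤ p.2 0}
  have hE : MeasurableSet E := by
    simp only [E, Set.ofPred_and]
    exact (measurableSet_le (by fun_prop) (by fun_prop)).inter
      ((measurableSet_le (by fun_prop) (by fun_prop)).inter
        ((measurableSet_le (by fun_prop) (by fun_prop)).inter
          (measurableSet_le (by fun_prop) (by fun_prop))))
  have hEF : ∀ p ∈ E, p.2 ∈ {v : EuclideanSpace ℝ (Fin 2) |
      ‖v - ξ'‖ ≤ δ ∧ |τ + a * ‖v‖ + b * ‖ξ - v‖| ≤ M₁ + M₂ ∧ ‖v‖ * κ ≤ v 0} := by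
    rintro ⟨t, v⟩ ⟨hδ, h₁, h₂, hκ⟩
    refine ⟨hδ, ?_, hκ⟩
    calc |τ + a * ‖v‖ + b * ‖ξ - v‖|
        = |((τ - t) + b * ‖ξ - v‖) + (t + a * ‖v‖)| := by congr 1; ring
      _ ≤ M₁ + M₂ :=
        (abs_add_le _ _).trans (add_le_add (abs_le_of_jb_le h₁) (abs_le_of_jb_le h₂))
  have hsec : ∀ v, volume ((·, v) ⁻¹' E) ≤ ENNReal.ofReal (2 * min M₁ M₂) := by
    refine fun v => (measure_mono fun t ht => ?_).trans
      (volume_setOf_jb_le_le (τ + b * ‖ξ - v‖) (a * ‖v‖) _ _)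
    exact ⟨by simpa only [sub_add_eq_add_sub] using ht.2.1, ht.2.2.1⟩
  have hκc : 0 < κ - c := sub_pos.2 hc
  calc volume E = volume.prod volume E := by rw [Measure.volume_eq_prod]
    _ ≤ ENNReal.ofReal (2 * min M₁ M₂) *
        (ENNReal.ofReal (2 * (M₁ + M₂) / (κ - c)) * ENNReal.ofReal (2 * δ)) :=
      (Measure.prod_le_mul_of_section_le hE hEF fun v _ => hsec v).trans
        (by gcongr; exact volume_cone_le ξ ξ' hc ha hb)
    _ = ENNReal.ofReal (8 * (min M₁ M₂ * (M₁ + M₂)) * δ / (κ - c)) := by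
      have : 0 ≤ min M₁ M₂ := le_min hM₁ hM₂
      rw [← ENNReal.ofReal_mul (by positivity), ← ENNReal.ofReal_mul (by positivity)]
      congr 1; ring

theorem stmt_8 (c : ℝ) (hc0 : 0 < c) (hc1 : c < 1) :
    ∃ C : ℝ, 0 < C ∧
      ∀ (L₁ L₂ δ : ℝ) (τ : ℝ) (ξ ξ' : EuclideanSpace ℝ (Fin 2)) (A : ℝ)
        (s₁ s₂ : ℝ),
        1 ≤ L₁ → 1 ≤ L₂ → 0 < δ →
        (s₁ = 1 ∨ s₁ = -1) → (s₂ = 1 ∨ s₂ = -1) →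
        2 ^ 10 / Real.sqrt (1 - c) ≤ A →
        volume {p : ℝ × EuclideanSpace ℝ (Fin 2) |
            ‖p.2 - ξ'‖ ≤ δ ∧
            jb ((τ - p.1) + s₁ * (c * ‖ξ - p.2‖)) ≤ 2 * L₁ ∧
            jb (p.1 + s₂ * ‖p.2‖) ≤ 2 * L₂ ∧
            ‖p.2‖ * Real.cos (Real.pi / A) ≤ p.2 0} ≤
          ENNReal.ofReal (C * δ * L₁ * L₂) := by
  refine ⟨128 / (1 - c), div_pos (by norm_num) (sub_pos.2 hc1), ?_⟩
  intro L₁ L₂ δ τ ξ ξ' A s₁ s₂ hL₁ hL₂ hδ hs₁ hs₂ hA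
  have hA₀ : 0 ≤ π / A :=
    div_nonneg pi_pos.le ((by positivity : (0 : ℝ) ≤ 2 ^ 10 / √(1 - c)).trans hA)
  have hκ := one_add_div_two_le_cos hc1.le hA₀ (pi_div_le_sqrt_one_sub hc1 hA)
  have ha : 1 ≤ |s₂| := by rcases hs₂ with rfl | rfl <;> norm_num
  have hb : |s₁ * c| ≤ c := by rcases hs₁ with rfl | rfl <;> simp [abs_of_pos hc0]
  simp only [← mul_assoc s₁]
  refine (volume_jb_cone_region_le ξ ξ' (by linarith) (by linarith)
    (by linarith : c < cos (π / A)) ha hb).trans (ENNReal.ofReal_le_ofReal ?_)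
  calc 8 * (min (2 * L₁) (2 * L₂) * (2 * L₁ + 2 * L₂)) * δ / (cos (π / A) - c)
      ≤ 8 * (2 * (2 * L₁ * (2 * L₂))) * δ / ((1 - c) / 2) := by
        gcongr 8 * ?_ * δ / ?_
        · exact min_mul_add_le_two_mul (by linarith) (by linarith)
        · linarith
    _ = 128 / (1 - c) * δ * L₁ * L₂ := by field_simp; ring
end

section
/- Let c ∈ (0,1), A ≥ 1, and let ξ₁', ξ₂' ∈ ℝ² be nonzero with ξ' = ξ₁' + ξ₂' ≠ 0 and with the sine of the angle between ξ₁' and ξ₂' at least a constant times A^{-1} (precisely |(ξ₁')₁(ξ₂')₂ − (ξ₁')₂(ξ₂')₁|/(|ξ₁'||ξ₂'|) ≥ 4A^{-1}). Then |det M| ≥ (1−c) A^{-1} where M is the 3×3 matrix with columns (−1, ξ₁'/|ξ₁'|), (1, ξ₂'/|ξ₂'|), (±1, c ξ'/|ξ'|), provided also ||ξ₂'| − |ξ₁'|| ≤ |ξ'|. -/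
theorem stmt_10 (c A : ℝ) (hc0 : 0 < c) (hc1 : c < 1) (hA : 1 ≤ A)
    (ξ₁' ξ₂' : EuclideanSpace ℝ (Fin 2)) (hξ₁ : ξ₁' ≠ 0) (hξ₂ : ξ₂' ≠ 0)
    (ξ' : EuclideanSpace ℝ (Fin 2)) (hξ' : ξ' = ξ₁' + ξ₂') (hξ'0 : ξ' ≠ 0)
    (hangle : 4 / A ≤ |ξ₁' 0 * ξ₂' 1 - ξ₁' 1 * ξ₂' 0| / (‖ξ₁'‖ * ‖ξ₂'‖))
    (hdiff : |‖ξ₂'‖ - ‖ξ₁'‖| ≤ ‖ξ'‖)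
    (s : ℝ) (hs : s = 1 ∨ s = -1) :
    (1 - c) / A ≤
      |(Matrix.of
          ![![-1, 1, s],
            ![ξ₁' 0 / ‖ξ₁'‖, ξ₂' 0 / ‖ξ₂'‖, c * (ξ' 0) / ‖ξ'‖],
            ![ξ₁' 1 / ‖ξ₁'‖, ξ₂' 1 / ‖ξ₂'‖, c * (ξ' 1) / ‖ξ'‖]] :
          Matrix (Fin 3) (Fin 3) ℝ).det| := by
  have hn1 : (0:ℝ) < ‖ξ₁'‖ := norm_pos_iff.mpr hξ₁
  have hn2 : (0:ℝ) < ‖ξ₂'‖ := norm_pos_iff.mpr hξ₂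
  have hn : (0:ℝ) < ‖ξ'‖ := norm_pos_iff.mpr hξ'0
  have hx0 : ξ' 0 = ξ₁' 0 + ξ₂' 0 := by rw [hξ']; rfl
  have hx1 : ξ' 1 = ξ₁' 1 + ξ₂' 1 := by rw [hξ']; rfl
  have hA0 : (0:ℝ) < A := lt_of_lt_of_le one_pos hA
  have key : (Matrix.of
          ![![-1, 1, s],
            ![ξ₁' 0 / ‖ξ₁'‖, ξ₂' 0 / ‖ξ₂'‖, c * (ξ' 0) / ‖ξ'‖],
            ![ξ₁' 1 / ‖ξ₁'‖, ξ₂' 1 / ‖ξ₂'‖, c * (ξ' 1) / ‖ξ'‖]] :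
          Matrix (Fin 3) (Fin 3) ℝ).det
      = ((ξ₁' 0 * ξ₂' 1 - ξ₁' 1 * ξ₂' 0) / (‖ξ₁'‖ * ‖ξ₂'‖))
        * (s + c * (‖ξ₁'‖ - ‖ξ₂'‖) / ‖ξ'‖) := by
    simp only [Matrix.det_fin_three, Matrix.of_apply, Matrix.cons_val',
      Matrix.cons_val_zero, Matrix.cons_val_one, Matrix.head_cons,
      Matrix.empty_val', Matrix.cons_val_fin_one, Matrix.head_fin_const,
      Matrix.cons_val_two, Matrix.tail_cons, hx0, hx1]
    field_simp
    ring
  rw [key, abs_mul]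
  have h2 : 1 - c ≤ |s + c * (‖ξ₁'‖ - ‖ξ₂'‖) / ‖ξ'‖| := by
    have hs1 : |s| = 1 := by rcases hs with h | h <;> simp [h]
    have ht : |c * (‖ξ₁'‖ - ‖ξ₂'‖) / ‖ξ'‖| ≤ c := by
      rw [abs_div, abs_mul, abs_of_pos hc0, abs_of_pos hn, div_le_iff₀ hn]
      have : |‖ξ₁'‖ - ‖ξ₂'‖| ≤ ‖ξ'‖ := by rwa [abs_sub_comm]
      calc c * |‖ξ₁'‖ - ‖ξ₂'‖| ≤ c * ‖ξ'‖ := by nlinarith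
        _ = c * ‖ξ'‖ := rfl
    calc 1 - c ≤ |s| - |c * (‖ξ₁'‖ - ‖ξ₂'‖) / ‖ξ'‖| := by rw [hs1]; linarith
      _ ≤ |s + c * (‖ξ₁'‖ - ‖ξ₂'‖) / ‖ξ'‖| := by
          have h := abs_sub_abs_le_abs_sub s (-(c * (‖ξ₁'‖ - ‖ξ₂'‖) / ‖ξ'‖))
          simpa [sub_neg_eq_add] using h
  have h1 : 4 / A ≤ |(ξ₁' 0 * ξ₂' 1 - ξ₁' 1 * ξ₂' 0) / (‖ξ₁'‖ * ‖ξ₂'‖)| := by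
    rw [abs_div, abs_of_pos (mul_pos hn1 hn2)]
    exact hangle
  have h4A : (1 - c) / A ≤ (4 / A) * (1 - c) := by
    rw [div_mul_eq_mul_div, div_le_div_iff₀ hA0 hA0]
    nlinarith
  calc (1 - c) / A ≤ (4 / A) * (1 - c) := h4A
    _ ≤ |(ξ₁' 0 * ξ₂' 1 - ξ₁' 1 * ξ₂' 0) / (‖ξ₁'‖ * ‖ξ₂'‖)|
        * |s + c * (‖ξ₁'‖ - ‖ξ₂'‖) / ‖ξ'‖| := by
      apply mul_le_mul h1 h2 (by linarith) (abs_nonneg _)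
end
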